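/- Let S be a nonempty finite set, R, P : S → ℝ with P(x) > 0 for all x ∈ S. Define the Dinkelbach iteration: η₀ = 0, xₗ ∈ argmax_{x ∈ S}(R(x) − ηₗ·P(x)), ηₗ₊₁ = R(xₗ)/P(xₗ). If R(x) ≥ 0 for some x ∈ S, then the sequence (ηₗ) is nondecreasing and converges to η* = max_{x ∈ S} R(x)/P(x). -/
import Mathlib


open Finset Filter

/-- Convergence of the Dinkelbach iteration over a nonempty finite set:
starting from `η 0 = 0`, picking at each step a maximizer `x l` of
`R x - η l * P x` and setting `η (l+1) = R (x l) / P (x l)`, if `R` is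
nonnegative somewhere, the sequence `η` is nondecreasing and converges to
`η* = max_x R x / P x`. -/
theorem dinkelbach_iteration_converges {α : Type*} [Fintype α] [Nonempty α]
    (R P : α → ℝ) (hP : ∀ x, 0 < P x)
    (η : ℕ → ℝ) (x : ℕ → α)
    (hη0 : η 0 = 0)
    (hargmax : ∀ l : ℕ, ∀ y : α, R y - η l * P y ≤ R (x l) - η l * P (x l))
    (hupd : ∀ l : ℕ, η (l + 1) = R (x l) / P (x l))
    (hRpos : ∃ y : α, 0 ≤ R y) :
    Monotone η ∧
      Tendsto η atTop (nhds (univ.sup' univ_nonempty (fun y => R y / P y))) := by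
   
  obtain ⟨y0, hy0⟩ := hRpos
  have hkey : ∀ l, 0 ≤ R (x l) - η l * P (x l) := by
    intro l
    cases l with
    | zero =>
      have h := hargmax 0 y0
      rw [hη0] at h ⊢
      simp only [zero_mul, sub_zero] at h ⊢
      linarith
    | succ n =>
      have h0 : R (x n) - η (n+1) * P (x n) = 0 := by
        rw [hupd n, div_mul_cancel₀ _ (hP (x n)).ne', sub_self]
      have h := hargmax (n+1) (x n)
      linarith
  have hmono : Monotone η := by
    apply monotone_nat_of_le_succ
    intro n
    have h := hkey n
    rw [hupd n, le_div_iff₀ (hP (x n))]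
    linarith
  obtain ⟨a, ha⟩ := Finite.exists_infinite_fiber x
  have hainf : (x ⁻¹' {a}).Infinite := Set.infinite_coe_iff.mp ha
  set c := R a / P a with hc
  obtain ⟨l1, hl1a, -⟩ := hainf.exists_gt 0
  have hl1a' : x l1 = a := hl1a
  have hle : ∀ n, η n ≤ c := by
    intro n
    obtain ⟨m, hm, hnm⟩ := hainf.exists_gt n
    have hmc : η (m+1) = c := by rw [hupd m, show x m = a from hm]
    calc η n ≤ η (m+1) := hmono (by omega)
      _ = c := hmc
  have hevc : ∀ n, l1 + 1 ≤ n → η n = c := by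
    intro n hn
    have h1 : η (l1+1) = c := by rw [hupd l1, hl1a']
    exact le_antisymm (hle n) (h1 ▸ hmono hn)
  have hcsup : c = univ.sup' univ_nonempty (fun y => R y / P y) := by
    apply le_antisymm
    · exact Finset.le_sup' (fun y => R y / P y) (mem_univ a)
    · apply Finset.sup'_le
      intro y _
      obtain ⟨m, hm, hnm⟩ := hainf.exists_gt (l1+1)
      have hηm : η m = c := hevc m (by omega)
      have hxm : x m = a := hm
      have h := hargmax m y
      rw [hxm, hηm] at h
      have h0 : R a - c * P a = 0 := by rw [hc, div_mul_cancel₀ _ (hP a).ne', sub_self]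
      rw [div_le_iff₀ (hP y)]
      linarith
  refine ⟨hmono, ?_⟩
  rw [← hcsup]
  apply Tendsto.congr' _ tendsto_const_nhds
  filter_upwards [eventually_ge_atTop (l1+1)] with n hn
  exact (hevc n hn).symm
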